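/- arXiv:2409.14290 — 2 statements merged into one kernel-verified Lean document; each statement's English description precedes it below -/
import Mathlib

section
/- Let X be a geodesic metric space in which every geodesic segment satisfies Manning's bottleneck criterion with constant Δ (i.e., for any two points x, y, the midpoint m of a geodesic from x to y has the property that every path from x to y intersects the closed ball of radius Δ around m). Then X is δ-hyperbolic for some δ depending only on Δ. -/
namespace PaperFormal

/-- A metric space is geodesic: any two points are joined by an isometrically
embedded segment of length `dist x y`. -/
def IsGeodesicSpace (X : Type*) [MetricSpace X] : Prop :=
  ∀ x y : X, ∃ f : ℝ → X, f 0 = x ∧ f (dist x y) = y ∧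
    ∀ s t : ℝ, s ∈ Set.Icc 0 (dist x y) → t ∈ Set.Icc 0 (dist x y) →
      dist (f s) (f t) = |s - t|

/-- Manning's bottleneck criterion with constant `Δ`: any two points `x, y` have a
midpoint `m` such that every path from `x` to `y` passes within `Δ` of `m`. -/
def Bottleneck (X : Type*) [MetricSpace X] (Δ : ℝ) : Prop :=
  ∀ x y : X, ∃ m : X, dist x m = dist x y / 2 ∧ dist y m = dist x y / 2 ∧
    ∀ p : Path x y, ∃ t : unitInterval, dist (p t) m ≤ Δ

section Aux

variable {X : Type*} [MetricSpace X]

lemma param_mem {L u v : ℝ} (hu : u ∈ Set.Icc 0 L) (hv : v ∈ Set.Icc 0 L)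
    (t : unitInterval) : u + (t : ℝ) * (v - u) ∈ Set.Icc 0 L := by
  obtain ⟨ht0, ht1⟩ := t.2
  obtain ⟨hu0, hu1⟩ := hu
  obtain ⟨hv0, hv1⟩ := hv
  constructor <;> nlinarith

/-- A (possibly reversed) piece of a geodesic, as a `Path`. -/
noncomputable def geoPath (f : ℝ → X) (L : ℝ)
    (hf : ∀ s t : ℝ, s ∈ Set.Icc 0 L → t ∈ Set.Icc 0 L → dist (f s) (f t) = |s - t|)
    (u v : ℝ) (hu : u ∈ Set.Icc 0 L) (hv : v ∈ Set.Icc 0 L) : Path (f u) (f v) where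
  toFun t := f (u + (t : ℝ) * (v - u))
  continuous_toFun := by
    apply LipschitzWith.continuous (K := ⟨|v - u|, abs_nonneg _⟩)
    apply LipschitzWith.of_dist_le_mul
    intro s t
    rw [hf _ _ (param_mem hu hv s) (param_mem hu hv t)]
    have hd : dist s t = |(s : ℝ) - (t : ℝ)| := by
      rw [Subtype.dist_eq, Real.dist_eq]
    rw [hd]
    have h1 : (u + (s : ℝ) * (v - u)) - (u + (t : ℝ) * (v - u))
        = (v - u) * ((s : ℝ) - (t : ℝ)) := by ring
    rw [h1, abs_mul]
    exact le_of_eq rfl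
  source' := by simp
  target' := by
    have : u + (1 : ℝ) * (v - u) = v := by ring
    simp [this]

lemma geoPath_apply (f : ℝ → X) (L : ℝ)
    (hf : ∀ s t : ℝ, s ∈ Set.Icc 0 L → t ∈ Set.Icc 0 L → dist (f s) (f t) = |s - t|)
    (u v : ℝ) (hu : u ∈ Set.Icc 0 L) (hv : v ∈ Set.Icc 0 L) (t : unitInterval) :
    geoPath f L hf u v hu hv t = f (u + (t : ℝ) * (v - u)) := rfl


lemma cast_geoPath_apply (f : ℝ → X) (L : ℝ)
    (hf : ∀ s t : ℝ, s ∈ Set.Icc 0 L → t ∈ Set.Icc 0 L → dist (f s) (f t) = |s - t|)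
    (u v : ℝ) (hu : u ∈ Set.Icc 0 L) (hv : v ∈ Set.Icc 0 L) {A B : X}
    (hA : A = f u) (hB : B = f v) (t : unitInterval) :
    ((geoPath f L hf u v hu hv).cast hA hB) t = f (u + (t : ℝ) * (v - u)) := by
  rw [Path.cast_coe]
  rfl

lemma trans_cases {x y z : X} (P : Path x y) (Q : Path y z) (t : unitInterval) :
    (∃ τ, (P.trans Q) t = P τ) ∨ (∃ τ, (P.trans Q) t = Q τ) := by
  rw [Path.trans_apply]
  split_ifs with h
  · exact Or.inl ⟨_, rfl⟩
  · exact Or.inr ⟨_, rfl⟩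

/-- Key lemma: in a geodesic bottleneck space, for any point `f r` on a geodesic
from `x` to `y`, and any `z`, the distance from `z` to `f r` is controlled. -/
lemma dist_to_geodesic_le {Δ : ℝ} (hΔ : 0 < Δ) (hG : IsGeodesicSpace X)
    (hB : Bottleneck X Δ) (x y : X) (f : ℝ → X)
    (h0 : f 0 = x) (h1 : f (dist x y) = y)
    (hf : ∀ s t : ℝ, s ∈ Set.Icc 0 (dist x y) → t ∈ Set.Icc 0 (dist x y) →
      dist (f s) (f t) = |s - t|)
    (r : ℝ) (hr : r ∈ Set.Icc 0 (dist x y)) (z : X) :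
    dist z (f r) ≤ max (dist x z - r) (dist z y - (dist x y - r)) + 8 * Δ := by
  set L := dist x y with hLdef
  set p := f r with hpdef
  have hL0 : (0:ℝ) ∈ Set.Icc (0:ℝ) L := ⟨le_refl _, hr.1.trans hr.2⟩
  have hLL : L ∈ Set.Icc (0:ℝ) L := ⟨hr.1.trans hr.2, le_refl _⟩
  have hxp : dist x p = r := by
    rw [← h0, hpdef, hf 0 r hL0 hr]
    rw [abs_sub_comm, abs_of_nonneg (by linarith [hr.1])]
    ring
  have hyp : dist y p = L - r := by
    rw [← h1, hpdef, hf L r hLL hr, abs_of_nonneg (by linarith [hr.2])]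
  -- Step 1: find q on a geodesic from x to z or from z to y, within 4Δ of p.
  have step1 : ∃ q : X, dist q p ≤ 4 * Δ ∧
      (dist x q + dist q z = dist x z ∨ dist z q + dist q y = dist z y) := by
    by_cases hc1 : r ≤ 4 * Δ
    · exact ⟨x, by rw [hxp]; linarith, Or.inl (by simp)⟩
    by_cases hc2 : L - r ≤ 4 * Δ
    · exact ⟨y, by rw [hyp]; linarith, Or.inr (by simp)⟩
    push_neg at hc1 hc2
    -- the nearby pair x', y' with p as midpoint
    have hr1 : r - 4 * Δ ∈ Set.Icc (0:ℝ) L := ⟨by linarith, by linarith⟩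
    have hr2 : r + 4 * Δ ∈ Set.Icc (0:ℝ) L := ⟨by linarith [hr.1], by linarith⟩
    set x' := f (r - 4 * Δ) with hx'def
    set y' := f (r + 4 * Δ) with hy'def
    have hxy' : dist x' y' = 8 * Δ := by
      rw [hx'def, hy'def, hf _ _ hr1 hr2]
      rw [abs_of_nonpos (by linarith)]
      ring
    obtain ⟨m, hm1, hm2, hm3⟩ := hB x' y'
    rw [hxy'] at hm1 hm2
    have hm1' : dist x' m = 4 * Δ := by linarith
    have hm2' : dist y' m = 4 * Δ := by linarith
    -- midpoint stability: dist p m ≤ 2Δ, via the geodesic itself as a path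
    have hpm : dist p m ≤ 2 * Δ := by
      obtain ⟨τ, hτ⟩ := hm3 (geoPath f L hf _ _ hr1 hr2)
      rw [geoPath_apply] at hτ
      set s := r - 4 * Δ + (τ : ℝ) * (r + 4 * Δ - (r - 4 * Δ)) with hsdef
      have hsmem : s ∈ Set.Icc (0:ℝ) L := param_mem hr1 hr2 τ
      have hs1 : r - 4 * Δ ≤ s := by
        have := τ.2.1; nlinarith [hΔ]
      have hs2 : s ≤ r + 4 * Δ := by
        have := τ.2.2; nlinarith [hΔ]
      have hx's : dist x' (f s) = s - (r - 4 * Δ) := by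
        rw [hx'def, hf _ _ hr1 hsmem, abs_of_nonpos (by linarith)]; ring
      have hy's : dist y' (f s) = r + 4 * Δ - s := by
        rw [hy'def, hf _ _ hr2 hsmem, abs_of_nonneg (by linarith)]
      have t1 : dist x' m ≤ dist x' (f s) + dist (f s) m := dist_triangle _ _ _
      have t2 : dist y' m ≤ dist y' (f s) + dist (f s) m := dist_triangle _ _ _
      have hps : dist p (f s) = |r - s| := by
        rw [hpdef, hf _ _ hr hsmem]
      have habs : |r - s| ≤ Δ := by
        rw [abs_le]; constructor <;> nlinarith [hτ, t1, t2, hx's, hy's, hm1', hm2',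
          dist_nonneg (x := f s) (y := m)]
      calc dist p m ≤ dist p (f s) + dist (f s) m := dist_triangle _ _ _
        _ ≤ Δ + Δ := by rw [hps]; exact add_le_add habs hτ
        _ = 2 * Δ := by ring
    -- the composite path x' → x → z → y → y'
    obtain ⟨g, hg0, hg1, hg⟩ := hG x z
    obtain ⟨h', hh0, hh1, hh⟩ := hG z y
    have hxz0 : (0:ℝ) ∈ Set.Icc (0:ℝ) (dist x z) := ⟨le_refl _, dist_nonneg⟩
    have hxzL : dist x z ∈ Set.Icc (0:ℝ) (dist x z) := ⟨dist_nonneg, le_refl _⟩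
    have hzy0 : (0:ℝ) ∈ Set.Icc (0:ℝ) (dist z y) := ⟨le_refl _, dist_nonneg⟩
    have hzyL : dist z y ∈ Set.Icc (0:ℝ) (dist z y) := ⟨dist_nonneg, le_refl _⟩
    let Pg : Path x z := (geoPath g (dist x z) hg 0 (dist x z) hxz0 hxzL).cast
      hg0.symm hg1.symm
    let Ph : Path z y := (geoPath h' (dist z y) hh 0 (dist z y) hzy0 hzyL).cast
      hh0.symm hh1.symm
    let P1 : Path x' x := (geoPath f L hf (r - 4 * Δ) 0 hr1 hL0).cast rfl h0.symm
    let P2 : Path y y' := (geoPath f L hf L (r + 4 * Δ) hLL hr2).cast h1.symm rfl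
    obtain ⟨τ, hτ⟩ := hm3 ((P1.trans (Pg.trans Ph)).trans P2)
    have hnear : dist (((P1.trans (Pg.trans Ph)).trans P2) τ) p ≤ 3 * Δ := by
      calc dist (((P1.trans (Pg.trans Ph)).trans P2) τ) p
          ≤ dist (((P1.trans (Pg.trans Ph)).trans P2) τ) m + dist m p := dist_triangle _ _ _
        _ ≤ Δ + 2 * Δ := add_le_add hτ (by rw [dist_comm]; exact hpm)
        _ = 3 * Δ := by ring
    -- locate the witness
    rcases trans_cases (P1.trans (Pg.trans Ph)) P2 τ with ⟨τ1, he⟩ | ⟨τ1, he⟩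
    · rw [he] at hnear
      rcases trans_cases P1 (Pg.trans Ph) τ1 with ⟨τ2, he2⟩ | ⟨τ2, he2⟩
      · -- on P1 : from x' to x, i.e. f s with s ∈ [0, r - 4Δ]: contradiction
        exfalso
        rw [he2] at hnear
        have : (P1 τ2 : X) = f (r - 4 * Δ + (τ2 : ℝ) * (0 - (r - 4 * Δ))) :=
          cast_geoPath_apply f L hf _ _ hr1 hL0 rfl h0.symm τ2
        rw [this] at hnear
        set s := r - 4 * Δ + (τ2 : ℝ) * (0 - (r - 4 * Δ)) with hsdef
        have hsmem : s ∈ Set.Icc (0:ℝ) L := param_mem hr1 hL0 τ2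
        have hs2 : s ≤ r - 4 * Δ := by
          have h01 := τ2.2.1
          have h02 := τ2.2.2
          nlinarith
        have : dist (f s) p = r - s := by
          rw [hpdef, hf _ _ hsmem hr, abs_of_nonpos (by linarith)]; ring
        rw [this] at hnear
        linarith
      · rcases trans_cases Pg Ph τ2 with ⟨τ3, he3⟩ | ⟨τ3, he3⟩
        · -- on Pg : geodesic from x to z
          rw [he2, he3] at hnear
          refine ⟨Pg τ3, hnear.trans (by linarith), Or.inl ?_⟩
          have hval : (Pg τ3 : X) = g (0 + (τ3 : ℝ) * (dist x z - 0)) :=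
            cast_geoPath_apply g (dist x z) hg _ _ hxz0 hxzL hg0.symm hg1.symm τ3
          set s := 0 + (τ3 : ℝ) * (dist x z - 0) with hsdef
          have hsmem : s ∈ Set.Icc (0:ℝ) (dist x z) := param_mem hxz0 hxzL τ3
          rw [hval]
          rw [← hg0, ← hg1, hg _ _ hxz0 hsmem, hg _ _ hsmem hxzL]
          rw [abs_of_nonpos (by linarith [hsmem.1]), abs_of_nonpos (by linarith [hsmem.2])]
          have : dist (g 0) (g (dist x z)) = |0 - dist x z| := hg _ _ hxz0 hxzL
          rw [this, abs_of_nonpos (by linarith [hsmem.1.trans hsmem.2])]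
          ring
        · -- on Ph : geodesic from z to y
          rw [he2, he3] at hnear
          refine ⟨Ph τ3, hnear.trans (by linarith), Or.inr ?_⟩
          have hval : (Ph τ3 : X) = h' (0 + (τ3 : ℝ) * (dist z y - 0)) :=
            cast_geoPath_apply h' (dist z y) hh _ _ hzy0 hzyL hh0.symm hh1.symm τ3
          set s := 0 + (τ3 : ℝ) * (dist z y - 0) with hsdef
          have hsmem : s ∈ Set.Icc (0:ℝ) (dist z y) := param_mem hzy0 hzyL τ3
          rw [hval]
          rw [← hh0, ← hh1, hh _ _ hzy0 hsmem, hh _ _ hsmem hzyL]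
          rw [abs_of_nonpos (by linarith [hsmem.1]), abs_of_nonpos (by linarith [hsmem.2])]
          have : dist (h' 0) (h' (dist z y)) = |0 - dist z y| := hh _ _ hzy0 hzyL
          rw [this, abs_of_nonpos (by linarith [hsmem.1.trans hsmem.2])]
          ring
    · -- on P2 : from y to y', i.e. f s with s ∈ [r + 4Δ, L]: contradiction
      exfalso
      rw [he] at hnear
      have hval : (P2 τ1 : X) = f (L + (τ1 : ℝ) * (r + 4 * Δ - L)) :=
        cast_geoPath_apply f L hf _ _ hLL hr2 h1.symm rfl τ1
      rw [hval] at hnear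
      set s := L + (τ1 : ℝ) * (r + 4 * Δ - L) with hsdef
      have hsmem : s ∈ Set.Icc (0:ℝ) L := param_mem hLL hr2 τ1
      have hs1 : r + 4 * Δ ≤ s := by
        have h01 := τ1.2.1
        have h02 := τ1.2.2
        nlinarith
      have : dist (f s) p = s - r := by
        rw [hpdef, hf _ _ hsmem hr, abs_of_nonneg (by linarith)]
      rw [this] at hnear
      linarith
  -- Step 2: conclude
  obtain ⟨q, hq, hcase⟩ := step1
  rcases hcase with hsum | hsum
  · have t1 : dist x p ≤ dist x q + dist q p := dist_triangle x q p
    have t2 : dist z p ≤ dist z q + dist q p := dist_triangle z q p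
    have hzq : dist z q = dist q z := dist_comm z q
    have hmax := le_max_left (dist x z - r) (dist z y - (L - r))
    linarith
  · have t1 : dist y p ≤ dist y q + dist q p := dist_triangle y q p
    have t2 : dist z p ≤ dist z q + dist q p := dist_triangle z q p
    have hzq : dist z q = dist q z := dist_comm z q
    have hyq : dist y q = dist q y := dist_comm y q
    have hmax := le_max_right (dist x z - r) (dist z y - (L - r))
    linarith

end Aux

/-- If a geodesic metric space satisfies the bottleneck criterion with constant `Δ`,
then it is `δ`-hyperbolic (four-point condition) for some `δ` depending only on `Δ`. -/
theorem bottleneck_implies_hyperbolic (Δ : ℝ) (hΔ : 0 < Δ) :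
    ∃ δ : ℝ, 0 ≤ δ ∧ ∀ (X : Type) (_ : MetricSpace X),
      IsGeodesicSpace X → Bottleneck X Δ →
      ∀ a b c d : X, dist a d + dist b c ≤
        max (dist a b + dist c d) (dist a c + dist b d) + 2 * δ := by
  refine ⟨8 * Δ, by linarith, ?_⟩
  intro X _ hG hB a b c d
  obtain ⟨f, h0, h1, hf⟩ := hG a d
  set t₁ := (dist a b + dist a d - dist b d) / 2 with ht₁def
  have ht₁0 : 0 ≤ t₁ := by
    have := dist_triangle b a d
    rw [dist_comm b a] at this
    rw [ht₁def]; linarith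
  have ht₁L : t₁ ≤ dist a d := by
    have := dist_triangle a d b
    rw [dist_comm d b] at this
    rw [ht₁def]; linarith
  have hmem : t₁ ∈ Set.Icc (0:ℝ) (dist a d) := ⟨ht₁0, ht₁L⟩
  have hbp := dist_to_geodesic_le hΔ hG hB a d f h0 h1 hf t₁ hmem b
  have hcp := dist_to_geodesic_le hΔ hG hB a d f h0 h1 hf t₁ hmem c
  have hbc : dist b c ≤ dist b (f t₁) + dist c (f t₁) := by
    rw [dist_comm c (f t₁)]
    exact dist_triangle _ _ _
  have hmaxb : max (dist a b - t₁) (dist b d - (dist a d - t₁))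
      = (dist a b + dist b d - dist a d) / 2 := by
    rw [ht₁def]
    rw [max_eq_left (by linarith)]
    ring
  rw [hmaxb] at hbp
  rcases le_total (dist a c - t₁) (dist c d - (dist a d - t₁)) with hmx | hmx
  · rw [max_eq_right hmx] at hcp
    have hgoal : dist a d + dist b c ≤ dist a b + dist c d + 16 * Δ := by
      rw [ht₁def] at hcp
      linarith
    have := le_max_left (dist a b + dist c d) (dist a c + dist b d)
    linarith
  · rw [max_eq_left hmx] at hcp
    have hgoal : dist a d + dist b c ≤ dist a c + dist b d + 16 * Δ := by
      rw [ht₁def] at hcp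
      linarith
    have := le_max_right (dist a b + dist c d) (dist a c + dist b d)
    linarith

end PaperFormal
end

section
/- Let X be a finite dimensional CAT(0) cube complex of dimension D, let h be an automorphism of X, and let 𝔥₀, 𝔥₁, 𝔥₂, … be pairwise distinct hyperplanes with 𝔥ᵢ = h^{ni}𝔥₀ for a fixed n ≥ 1. Then there exists 1 ≤ k ≤ D such that 𝔥₀ and 𝔥ₖ = h^{nk}𝔥₀ are disjoint. -/
namespace PaperFormal

/-- Walks in a graph given by an adjacency relation: a walk from `x` to `y`
is a nonempty list of successively adjacent vertices starting at `x` and ending at `y`. -/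
def IsWalk {V : Type*} (adj : V → V → Prop) (x y : V) (l : List V) : Prop :=
  l.Chain' adj ∧ l.head? = some x ∧ l.getLast? = some y

/-- Combinatorial distance in a graph (number of edges of a shortest walk). -/
noncomputable def gdist {V : Type*} (adj : V → V → Prop) (x y : V) : ℕ :=
  sInf {n | ∃ l, IsWalk adj x y l ∧ l.length = n + 1}

/-- A combinatorial model of (the 1-skeleton of) a CAT(0) cube complex:
a graph with vertex set `V`, a set `H` of hyperplanes, a two-sided halfspace
assignment `side`, and a hyperplane `dual e` dual to each edge `e`, such that an
edge crosses exactly its dual hyperplane. -/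
structure CubeCpx (V H : Type*) where
  adj : V → V → Prop
  symm : ∀ u v, adj u v → adj v u
  side : H → V → Bool
  dual : V → V → H
  flips : ∀ u v, adj u v → ∀ h : H, (side h u ≠ side h v ↔ h = dual u v)

namespace CubeCpx

variable {V H : Type*}

/-- Two hyperplanes cross when all four quadrants are nonempty. -/
def cross (C : CubeCpx V H) (h h' : H) : Prop :=
  h ≠ h' ∧ ∀ b b' : Bool, ∃ v, C.side h v = b ∧ C.side h' v = b'

/-- A hyperplane is compact iff it is dual to only finitely many edges. -/
def CompactHyp (C : CubeCpx V H) (h : H) : Prop :=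
  {p : V × V | C.adj p.1 p.2 ∧ C.dual p.1 p.2 = h}.Finite

/-- The halfspace of a hyperplane on side `b`. -/
def half (C : CubeCpx V H) (h : H) (b : Bool) : Set V := {v | C.side h v = b}

end CubeCpx

/-- A cellular action of a group `G` on a cube complex: it preserves adjacency and
is compatible with duality and the halfspace structure. -/
structure CubeAction (G : Type*) {V H : Type*} [Group G] [MulAction G V] [MulAction G H]
    (C : CubeCpx V H) : Prop where
  adj_smul : ∀ (g : G) (u v : V), C.adj u v → C.adj (g • u) (g • v)
  dual_smul : ∀ (g : G) (u v : V), C.adj u v → C.dual (g • u) (g • v) = g • C.dual u v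
  side_smul : ∀ (g : G) (h : H) (v : V), C.side (g • h) (g • v) = C.side h v

/-- A graph is a quasi-tree if it is quasi-isometric to a simplicial tree. -/
def QuasiTree {V : Type*} (adj : V → V → Prop) : Prop :=
  ∃ (T : Type) (Γ : SimpleGraph T) (f : V → T) (lam c : ℕ),
    Γ.IsTree ∧ 1 ≤ lam ∧
    (∀ x y, gdist adj x y ≤ lam * Γ.dist (f x) (f y) + c) ∧
    (∀ x y, Γ.dist (f x) (f y) ≤ lam * gdist adj x y + c) ∧
    (∀ t, ∃ x, Γ.dist t (f x) ≤ c)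


/-- In a `D`-dimensional CAT(0) cube complex, if the hyperplanes `h^{ni} • 𝔥₀` are
pairwise distinct, then for some `1 ≤ k ≤ D` the hyperplanes `𝔥₀` and `h^{nk} • 𝔥₀`
are disjoint (distinct and non-crossing). -/
theorem distinct_translates_disjoint (G V H : Type*) [Group G] [MulAction G V]
    [MulAction G H] (C : CubeCpx V H) (hact : CubeAction G C)
    (D : ℕ) (hdim : ∀ s : Finset H, (∀ a ∈ s, ∀ b ∈ s, a ≠ b → C.cross a b) → s.card ≤ D)
    (h : G) (𝔥₀ : H) (n : ℕ) (hn : 1 ≤ n)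
    (hdist : ∀ i j : ℕ, i ≠ j → h ^ (n * i) • 𝔥₀ ≠ h ^ (n * j) • 𝔥₀) :
    ∃ k : ℕ, 1 ≤ k ∧ k ≤ D ∧ 𝔥₀ ≠ h ^ (n * k) • 𝔥₀ ∧
      ¬ C.cross 𝔥₀ (h ^ (n * k) • 𝔥₀) := by
  classical
  by_contra hcon
  push_neg at hcon
  -- crossing is equivariant
  have cross_smul : ∀ (g : G) (a b : H), C.cross a b → C.cross (g • a) (g • b) := by
    intro g a b ⟨hne, hq⟩
    refine ⟨fun e => hne (smul_left_cancel g e), fun b1 b2 => ?_⟩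
    obtain ⟨v, hv1, hv2⟩ := hq b1 b2
    exact ⟨g • v, by rw [hact.side_smul]; exact hv1, by rw [hact.side_smul]; exact hv2⟩
  have cross_symm : ∀ a b : H, C.cross a b → C.cross b a := by
    intro a b ⟨hne, hq⟩
    refine ⟨hne.symm, fun b1 b2 => ?_⟩
    obtain ⟨v, hv1, hv2⟩ := hq b2 b1
    exact ⟨v, hv2, hv1⟩
  have h𝔥₀ : (1 : G) • 𝔥₀ = 𝔥₀ := one_smul G 𝔥₀
  have hne0 : ∀ k : ℕ, 1 ≤ k → 𝔥₀ ≠ h ^ (n * k) • 𝔥₀ := by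
    intro k hk
    have := hdist 0 k (by omega)
    simpa using this
  have hcross : ∀ k : ℕ, 1 ≤ k → k ≤ D → C.cross 𝔥₀ (h ^ (n * k) • 𝔥₀) := fun k h1 h2 =>
    hcon k h1 h2 (hne0 k h1)
  -- any two translates at distance ≤ D cross
  have hcross' : ∀ i j : ℕ, i < j → j - i ≤ D →
      C.cross (h ^ (n * i) • 𝔥₀) (h ^ (n * j) • 𝔥₀) := by
    intro i j hij hle
    have hk : 1 ≤ j - i := by omega
    have := cross_smul (h ^ (n * i)) _ _ (hcross (j - i) hk hle)
    have heq : h ^ (n * i) • h ^ (n * (j - i)) • 𝔥₀ = h ^ (n * j) • 𝔥₀ := by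
      have hji : i + (j - i) = j := by omega
      rw [← mul_smul, ← pow_add, ← Nat.mul_add, hji]
    rwa [heq] at this
  set f : ℕ → H := fun i => h ^ (n * i) • 𝔥₀ with hf
  have hinj : Set.InjOn f (Finset.range (D + 1)) := by
    intro a _ b _ hab
    by_contra hne
    exact hdist a b hne hab
  have hcard : ((Finset.range (D + 1)).image f).card = D + 1 := by
    rw [Finset.card_image_of_injOn hinj, Finset.card_range]
  have hpair : ∀ a ∈ (Finset.range (D + 1)).image f,
      ∀ b ∈ (Finset.range (D + 1)).image f, a ≠ b → C.cross a b := by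
    intro a ha b hb hab
    obtain ⟨i, hi, rfl⟩ := Finset.mem_image.mp ha
    obtain ⟨j, hj, rfl⟩ := Finset.mem_image.mp hb
    simp only [Finset.mem_range] at hi hj
    have hijne : i ≠ j := fun e => hab (by rw [e])
    rcases Nat.lt_or_ge i j with hlt | hge
    · exact hcross' i j hlt (by omega)
    · exact cross_symm _ _ (hcross' j i (by omega) (by omega))
  have := hdim _ hpair
  omega

end PaperFormal
end
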